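/- Contraction comparison: for a finite MDP with two nonempty-valued selection operators α₁ ⊆ α₂ (pointwise), the fixed points Q₁, Q₂ of the corresponding reduced Bellman optimality operators satisfy Q₁(s,a) ≤ Q₂(s,a) for all (s,a), provided rewards are shared. Consequently max_{a ∈ α₁(s)} Q₁(s,a) ≤ max_{a ∈ α₂(s)} Q₂(s,a) for every s. -/

import Mathlib

/-! Let `M` be the largest value of `Q₁ - Q₂`. Since `α₁ ⊆ α₂`, the maxima in the fixed-point
equations satisfy `max_{α₁} Q₁ ≤ max_{α₂} Q₂ + M`, and averaging against the stochastic `P`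
and scaling by `γ ≥ 0` gives `Q₁ ≤ Q₂ + γ M`. Hence `M ≤ γ M`, so `M ≤ 0` as `γ < 1`. -/

open scoped BigOperators

open Finset

/-- The reduced Bellman optimality operator
`(T'Q)(s,a) = R s + γ * ∑ s', P s a s' * max_{a' ∈ α s'} Q s' a'`. -/
noncomputable def redBellman {S A : Type*} [Fintype S]
    (P : S → A → S → ℝ) (R : S → ℝ) (γ : ℝ) (α : S → Set A)
    (Q : S → A → ℝ) : S → A → ℝ :=
  fun s a => R s + γ * ∑ s', P s a s' * sSup ((Q s') '' α s')

theorem le_of_forall_le_add_imp_le_add_mul {ι : Type*} [Finite ι] {f g : ι → ℝ} {γ : ℝ}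
    (hγ : γ < 1) (h : ∀ M, (∀ i, f i ≤ g i + M) → ∀ i, f i ≤ g i + γ * M) : f ≤ g := by
  intro i
  by_contra! hi
  have : Nonempty ι := ⟨i⟩
  obtain ⟨j, hj⟩ := Finite.exists_max fun k => f k - g k
  have hpos : 0 < f j - g j := (sub_pos.2 hi).trans_le (hj i)
  have hj' := h (f j - g j) (fun k => by linarith [hj k]) j
  linarith [mul_lt_of_lt_one_left hpos hγ]

theorem sSup_image_le_sSup_image_add {A : Type*} {f g : A → ℝ} {s t : Set A} {c : ℝ}
    (hs : s.Nonempty) (hst : s ⊆ t) (ht : BddAbove (g '' t)) (hfg : ∀ a ∈ s, f a ≤ g a + c) :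
    sSup (f '' s) ≤ sSup (g '' t) + c := by
  refine csSup_le (hs.image f) ?_
  rintro _ ⟨a, ha, rfl⟩
  linarith [hfg a ha, le_csSup ht ⟨a, hst ha, rfl⟩]

theorem sum_mul_le_sum_mul_add {ι : Type*} [Fintype ι] {w x y : ι → ℝ} {M : ℝ}
    (hw₀ : ∀ i, 0 ≤ w i) (hw₁ : ∑ i, w i = 1) (hxy : ∀ i, x i ≤ y i + M) :
    ∑ i, w i * x i ≤ ∑ i, w i * y i + M :=
  calc ∑ i, w i * x i ≤ ∑ i, w i * (y i + M) :=
        sum_le_sum fun i _ => mul_le_mul_of_nonneg_left (hxy i) (hw₀ i)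
    _ = ∑ i, w i * y i + M := by simp only [mul_add, sum_add_distrib, ← sum_mul, hw₁, one_mul]

theorem redBellman_le_add_mul {S A : Type*} [Fintype S] [Finite A] {P : S → A → S → ℝ}
    (hP₀ : ∀ s a s', 0 ≤ P s a s') (hP₁ : ∀ s a, ∑ s', P s a s' = 1) (R : S → ℝ) {γ : ℝ}
    (hγ₀ : 0 ≤ γ) {α₁ α₂ : S → Set A} (hα₁ : ∀ s, (α₁ s).Nonempty) (hsub : ∀ s, α₁ s ⊆ α₂ s)
    {Q₁ Q₂ : S → A → ℝ} {M : ℝ} (hQ : ∀ s a, Q₁ s a ≤ Q₂ s a + M) (s : S) (a : A) :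
    redBellman P R γ α₁ Q₁ s a ≤ redBellman P R γ α₂ Q₂ s a + γ * M := by
  have hmax : ∀ s', sSup (Q₁ s' '' α₁ s') ≤ sSup (Q₂ s' '' α₂ s') + M := fun s' =>
    sSup_image_le_sSup_image_add (hα₁ s') (hsub s') (Set.toFinite _).bddAbove
      fun a _ => hQ s' a
  have hsum := sum_mul_le_sum_mul_add (hP₀ s a) (hP₁ s a) hmax
  have hγsum := mul_le_mul_of_nonneg_left hsum hγ₀
  rw [mul_add] at hγsum
  simp only [redBellman]
  linarith

theorem stmt_10_general {S A : Type*} [Fintype S] [Fintype A]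
    (P : S → A → S → ℝ) (hP₀ : ∀ s a s', 0 ≤ P s a s')
    (hP₁ : ∀ s a, ∑ s', P s a s' = 1)
    (R : S → ℝ) (γ : ℝ) (hγ₀ : 0 ≤ γ) (hγ₁ : γ < 1)
    (α₁ α₂ : S → Set A) (hα₁ : ∀ s, (α₁ s).Nonempty)
    (hsub : ∀ s, α₁ s ⊆ α₂ s)
    (Q₁ : S → A → ℝ) (hQ₁ : redBellman P R γ α₁ Q₁ = Q₁)
    (Q₂ : S → A → ℝ) (hQ₂ : redBellman P R γ α₂ Q₂ = Q₂) :
    (∀ s a, Q₁ s a ≤ Q₂ s a) ∧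
    (∀ s, sSup ((Q₁ s) '' α₁ s) ≤ sSup ((Q₂ s) '' α₂ s)) := by
  have hle : (fun p : S × A => Q₁ p.1 p.2) ≤ fun p => Q₂ p.1 p.2 := by
    refine le_of_forall_le_add_imp_le_add_mul hγ₁ fun M hM ⟨s, a⟩ => ?_
    rw [← hQ₁, ← hQ₂]
    exact redBellman_le_add_mul hP₀ hP₁ R hγ₀ hα₁ hsub (fun s a => hM (s, a)) s a
  refine ⟨fun s a => hle (s, a), fun s => ?_⟩
  simpa using sSup_image_le_sSup_image_add (f := Q₁ s) (c := 0) (hα₁ s) (hsub s)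
    (Set.toFinite _).bddAbove fun a _ => by simpa using hle (s, a)

/-- fixed points of reduced Bellman operators are monotone in
the selection operator. -/
theorem stmt_10 {S A : Type*} [Fintype S] [Fintype A] [Nonempty S] [Nonempty A]
    (P : S → A → S → ℝ) (hP₀ : ∀ s a s', 0 ≤ P s a s')
    (hP₁ : ∀ s a, ∑ s', P s a s' = 1)
    (R : S → ℝ) (γ : ℝ) (hγ₀ : 0 ≤ γ) (hγ₁ : γ < 1)
    (α₁ α₂ : S → Set A) (hα₁ : ∀ s, (α₁ s).Nonempty) (hα₂ : ∀ s, (α₂ s).Nonempty)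
    (hsub : ∀ s, α₁ s ⊆ α₂ s)
    (Q₁ : S → A → ℝ) (hQ₁ : redBellman P R γ α₁ Q₁ = Q₁)
    (Q₂ : S → A → ℝ) (hQ₂ : redBellman P R γ α₂ Q₂ = Q₂) :
    (∀ s a, Q₁ s a ≤ Q₂ s a) ∧
    (∀ s, sSup ((Q₁ s) '' α₁ s) ≤ sSup ((Q₂ s) '' α₂ s)) :=
  stmt_10_general P hP₀ hP₁ R γ hγ₀ hγ₁ α₁ α₂ hα₁ hsub Q₁ hQ₁ Q₂ hQ₂
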